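/- For each n ≥ 1, the coefficient generating function identity holds: the sum over partitions π = (λ_1 > λ_2 > ... > λ_ν) into distinct parts of q^{|π|} · ∏_{i=1}^{ν}(2λ_i - 2λ_{i+1} - 1) (with the convention λ_{ν+1} = 0) equals ∑_{n≥0} q^{n(n+1)/2} (-q;q)_n / ((q;q)_n)^2, as formal power series in q. -/

import Mathlib

open scoped Classical

/-- The weight `∏_{i=1}^{ν} (2 λ_i - 2 λ_{i+1} - 1)` (with `λ_{ν+1} = 0`) on the list of
parts written in decreasing order. -/
def wtTwo : List ℕ → ℕ
  | [] => 1
  | [x] => 2 * x - 1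
  | x :: y :: t => (2 * x - 2 * y - 1) * wtTwo (y :: t)

/-!
Write a partition into distinct parts `λ₁ > ⋯ > λ_ν` through its gaps `gᵢ = λᵢ - λᵢ₊₁ - 1`
(with `λ_{ν+1} = 0`). This identifies such partitions with arbitrary vectors `g ∈ ℕ^ν`, and
`|π| = ν(ν+1)/2 + ∑ i gᵢ` while the weight is `∏ (2gᵢ + 1)`. So the partitions with `ν` parts
contribute `q^{ν(ν+1)/2} ∏_{i ≤ ν} ∑_g (2g+1) q^{ig}`, and `∑_g (2g+1) x^g = (1+x)/(1-x)²`.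
-/

open PowerSeries Finset

namespace List

@[to_additive]
theorem prod_range_length_map_getD {α M : Type*} [CommMonoid M] (l : List α) (d : α) (f : α → M) :
    ∏ i ∈ Finset.range l.length, f (l.getD i d) = (l.map f).prod := by
  induction l with
  | nil => rfl
  | cons x t ih =>
    simp only [length_cons, Finset.prod_range_succ', getD_cons_succ, getD_cons_zero, ih, map_cons,
      prod_cons, mul_comm]

def ofGaps : List ℕ → List ℕ
  | [] => []
  | g :: t => (g + 1 + t.ofGaps.headI) :: t.ofGaps

def gaps : List ℕ → List ℕ
  | [] => []
  | x :: t => (x - 1 - t.headI) :: t.gaps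

@[simp] theorem length_ofGaps (g : List ℕ) : g.ofGaps.length = g.length := by
  induction g with
  | nil => rfl
  | cons x t ih => simp [ofGaps, ih]

@[simp] theorem length_gaps (L : List ℕ) : L.gaps.length = L.length := by
  induction L with
  | nil => rfl
  | cons x t ih => simp [gaps, ih]

theorem headI_ofGaps (g : List ℕ) : g.ofGaps.headI = g.length + g.sum := by
  induction g with
  | nil => rfl
  | cons x t ih =>
    simp only [ofGaps, ih, headI_cons, length_cons, sum_cons]
    omega

theorem gaps_ofGaps (g : List ℕ) : g.ofGaps.gaps = g := by
  induction g with
  | nil => rfl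
  | cons x t ih => simp [ofGaps, gaps, ih]

theorem pairwise_ofGaps (g : List ℕ) : g.ofGaps.Pairwise (· > ·) := by
  induction g with
  | nil => simp [ofGaps]
  | cons x t ih =>
    refine pairwise_cons.2 ⟨fun b hb => ?_, ih⟩
    cases h : t.ofGaps with
    | nil => simp [h] at hb
    | cons a s =>
      rw [h] at hb ih
      have : b ≤ a := (mem_cons.1 hb).elim le_of_eq fun hbs => ((pairwise_cons.1 ih).1 b hbs).le
      simp only [headI]
      omega

theorem pos_of_mem_ofGaps {g : List ℕ} {x : ℕ} (hx : x ∈ g.ofGaps) : 0 < x := by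
  induction g with
  | nil => simp [ofGaps] at hx
  | cons y t ih =>
    rcases mem_cons.1 hx with rfl | hx
    · omega
    · exact ih hx

theorem ofGaps_gaps {L : List ℕ} (hL : L.Pairwise (· > ·)) (hpos : ∀ x ∈ L, 0 < x) :
    L.gaps.ofGaps = L := by
  induction L with
  | nil => rfl
  | cons x t ih =>
    obtain ⟨hxt, ht⟩ := pairwise_cons.1 hL
    simp only [gaps, ofGaps, ih ht fun y hy => hpos y (mem_cons_of_mem _ hy), cons.injEq, and_true]
    have hx := hpos x mem_cons_self
    cases t with
    | nil =>
      simp only [headI_nil, Nat.default_eq_zero, tsub_zero, add_zero]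
      omega
    | cons a s => have := hxt a mem_cons_self; simp only [headI]; omega

theorem sum_ofGaps (g : List ℕ) :
    g.ofGaps.sum
      = g.length * (g.length + 1) / 2 + ∑ i ∈ Finset.range g.length, (i + 1) * g.getD i 0 := by
  induction g with
  | nil => rfl
  | cons x t ih =>
    have hT : (t.length + 1) * (t.length + 1 + 1) / 2
        = t.length * (t.length + 1) / 2 + (t.length + 1) := by
      rw [show (t.length + 1) * (t.length + 1 + 1) = t.length * (t.length + 1) + 2 * (t.length + 1)
        by ring, Nat.add_mul_div_left _ _ two_pos]
    have hsum : ∑ i ∈ Finset.range t.length, t.getD i 0 = t.sum := by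
      simpa using sum_range_length_map_getD t 0 id
    simp only [ofGaps, sum_cons, ih, headI_ofGaps, length_cons, hT, Finset.sum_range_succ',
      getD_cons_succ, getD_cons_zero]
    rw [Finset.sum_congr rfl fun i _ => add_one_mul (i + 1) (t.getD i 0), Finset.sum_add_distrib,
      hsum]
    ring

theorem wtTwo_ofGaps (g : List ℕ) : wtTwo g.ofGaps = (g.map (2 * · + 1)).prod := by
  induction g with
  | nil => rfl
  | cons x t ih =>
    cases t with
    | nil =>
      simp only [ofGaps, headI_nil, Nat.default_eq_zero, add_zero, wtTwo, map_cons, map_nil,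
        prod_cons, prod_nil, mul_one]
      omega
    | cons y s =>
      simp only [ofGaps, wtTwo, map_cons, prod_cons, headI] at ih ⊢
      rw [← ih]
      congr 1
      omega

end List

theorem Multiset.sort_coe_of_pairwise {α : Type*} (r : α → α → Prop) [DecidableRel r]
    [IsTrans α r] [Std.Antisymm r] [Std.Total r] {l : List α} (hl : l.Pairwise r) :
    (l : Multiset α).sort r = l := by
  rw [Multiset.coe_sort, List.mergeSort_eq_self r hl]

section ScaledGaps

variable {L : List ℕ} {n : ℕ} {l : ℕ →₀ ℕ}

/-- The gap `gᵢ` of `L` enters the generating function as the exponent `(i + 1) gᵢ` of `X` in the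
factor `expand (i + 1) (oddSeries R)`; these exponents form the index of `PowerSeries.coeff_prod`. -/
noncomputable def scaledGaps (L : List ℕ) : ℕ →₀ ℕ :=
  Finsupp.onFinset (range L.length) (fun i => (i + 1) * L.gaps.getD i 0) fun i hi => by
    by_contra h
    exact hi (by rw [List.getD_eq_default _ _ (by simpa using h), mul_zero])

def ofScaledGaps (n : ℕ) (l : ℕ →₀ ℕ) : List ℕ :=
  ((List.range n).map fun i => l i / (i + 1)).ofGaps

theorem scaledGaps_apply (i : ℕ) : scaledGaps L i = (i + 1) * L.gaps.getD i 0 := rfl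

theorem support_scaledGaps_subset : (scaledGaps L).support ⊆ range L.length :=
  Finsupp.support_onFinset_subset

theorem pairwise_ofScaledGaps : (ofScaledGaps n l).Pairwise (· > ·) :=
  List.pairwise_ofGaps _

@[simp] theorem length_ofScaledGaps : (ofScaledGaps n l).length = n := by
  simp [ofScaledGaps]

section StrictAnti

variable (hL : L.Pairwise (· > ·)) (hpos : ∀ x ∈ L, 0 < x)
include hL hpos

theorem sum_eq_add_sum_scaledGaps :
    L.sum = L.length * (L.length + 1) / 2 + ∑ i ∈ range L.length, scaledGaps L i := by
  conv_lhs => rw [← List.ofGaps_gaps hL hpos]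
  rw [List.sum_ofGaps, List.length_gaps]
  rfl

theorem ofScaledGaps_scaledGaps : ofScaledGaps L.length (scaledGaps L) = L := by
  suffices (List.range L.length).map (fun i => scaledGaps L i / (i + 1)) = L.gaps by
    rw [ofScaledGaps, this, List.ofGaps_gaps hL hpos]
  refine List.ext_getElem (by simp) fun i _ hi => ?_
  simp only [List.getElem_map, List.getElem_range, scaledGaps_apply,
    Nat.mul_div_cancel_left _ i.succ_pos, List.getD_eq_getElem _ _ hi]

theorem wtTwo_eq_prod_gaps : wtTwo L = ∏ i ∈ range L.length, (2 * L.gaps.getD i 0 + 1) := by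
  rw [← List.length_gaps, List.prod_range_length_map_getD L.gaps 0 (2 * · + 1), ← List.wtTwo_ofGaps,
    List.ofGaps_gaps hL hpos]

end StrictAnti

section Divisible

variable (hl : l.support ⊆ range n) (hdvd : ∀ i < n, i + 1 ∣ l i)
include hdvd

theorem sum_ofScaledGaps : (ofScaledGaps n l).sum = n * (n + 1) / 2 + ∑ i ∈ range n, l i := by
  rw [ofScaledGaps, List.sum_ofGaps, List.length_map, List.length_range]
  congr 1
  refine sum_congr rfl fun i hi => ?_
  have hi := mem_range.1 hi
  simp [hi, Nat.mul_div_cancel' (hdvd i hi)]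

include hl in
theorem scaledGaps_ofScaledGaps : scaledGaps (ofScaledGaps n l) = l := by
  ext i
  rw [scaledGaps_apply, ofScaledGaps, List.gaps_ofGaps]
  by_cases hi : i < n
  · simp [hi, Nat.mul_div_cancel' (hdvd i hi)]
  · rw [List.getD_eq_default _ _ (by simpa using hi), mul_zero, eq_comm, ← Finsupp.notMem_support_iff]
    exact fun h => hi (mem_range.1 (hl h))

end Divisible

end ScaledGaps

namespace Nat.Partition

variable {m : ℕ} (π : m.Partition)

theorem pairwise_sort_parts (hπ : π.parts.Nodup) : (π.parts.sort (· ≥ ·)).Pairwise (· > ·) :=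
  (π.parts.pairwise_sort _).imp₂ (fun _ _ hab hne => lt_of_le_of_ne hab (Ne.symm hne))
    (Multiset.coe_nodup.1 (by rwa [Multiset.sort_eq]))

theorem pos_of_mem_sort_parts {x : ℕ} (hx : x ∈ π.parts.sort (· ≥ ·)) : 0 < x :=
  π.parts_pos ((Multiset.mem_sort _).1 hx)

theorem sum_sort_parts : (π.parts.sort (· ≥ ·)).sum = m := by
  rw [← Multiset.sum_coe, Multiset.sort_eq, π.parts_sum]

theorem card_parts_le : π.parts.card ≤ m := by
  simpa [π.parts_sum] using Multiset.card_nsmul_le_sum fun _ => π.parts_pos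

theorem eq_add_sum_scaledGaps (hπ : π.parts.Nodup) :
    m = π.parts.card * (π.parts.card + 1) / 2
      + ∑ i ∈ range π.parts.card, scaledGaps (π.parts.sort (· ≥ ·)) i := by
  conv_lhs => rw [← π.sum_sort_parts]
  rw [sum_eq_add_sum_scaledGaps (π.pairwise_sort_parts hπ) fun _ => π.pos_of_mem_sort_parts,
    Multiset.length_sort]

end Nat.Partition

section GapVectors

variable {m n : ℕ} {l : ℕ →₀ ℕ}

def scaledGapVectors (m n : ℕ) : Finset (ℕ →₀ ℕ) :=
  {l ∈ finsuppAntidiag (range n) (m - n * (n + 1) / 2) | ∀ i < n, i + 1 ∣ l i}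

theorem mem_scaledGapVectors : l ∈ scaledGapVectors m n ↔
    (∑ i ∈ range n, l i = m - n * (n + 1) / 2 ∧ l.support ⊆ range n) ∧ ∀ i < n, i + 1 ∣ l i := by
  rw [scaledGapVectors, mem_filter, mem_finsuppAntidiag]

theorem sum_ofScaledGaps_of_mem (hT : n * (n + 1) / 2 ≤ m) (hl : l ∈ scaledGapVectors m n) :
    (ofScaledGaps n l).sum = m := by
  obtain ⟨⟨hsum, -⟩, hdvd⟩ := mem_scaledGapVectors.1 hl
  rw [sum_ofScaledGaps hdvd, hsum]
  omega

theorem scaledGaps_mem_scaledGapVectors (π : m.Partition) (hπ : π.parts.Nodup) :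
    scaledGaps (π.parts.sort (· ≥ ·)) ∈ scaledGapVectors m π.parts.card := by
  refine mem_scaledGapVectors.2 ⟨⟨?_, ?_⟩, fun i _ => dvd_mul_right _ _⟩
  · have := π.eq_add_sum_scaledGaps hπ
    omega
  · rw [← Multiset.length_sort (· ≥ ·)]
    exact support_scaledGaps_subset

end GapVectors

namespace PowerSeries

variable (R : Type*) [CommRing R]

noncomputable def oddSeries : R⟦X⟧ := mk fun g => ((2 * g + 1 : ℕ) : R)

variable {R}

theorem one_sub_X_sq_mul_oddSeries : (1 - X) ^ 2 * oddSeries R = 1 + X := by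
  rw [show (1 - X) ^ 2 * oddSeries R = oddSeries R - X * (oddSeries R + oddSeries R)
    + X ^ 2 * oddSeries R by ring]
  ext (_ | _ | n) <;> simp [oddSeries, coeff_X_pow_mul', coeff_one, coeff_X] <;> ring

theorem one_sub_X_pow_sq_mul_expand_oddSeries {k : ℕ} (hk : k ≠ 0) :
    (1 - X ^ k) ^ 2 * expand k hk (oddSeries R) = 1 + X ^ k := by
  simpa using congrArg (expand k hk) (one_sub_X_sq_mul_oddSeries (R := R))

theorem prod_one_add_X_pow_mul_inv_prod_one_sub_X_pow_sq {K : Type*} [Field K] (n : ℕ) :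
    (∏ i ∈ range n, (1 + X ^ (i + 1))) * (∏ i ∈ range n, (1 - X ^ (i + 1) : K⟦X⟧))⁻¹ ^ 2
      = ∏ i ∈ range n, expand (i + 1) i.succ_ne_zero (oddSeries K) := by
  set Q := ∏ i ∈ range n, (1 - X ^ (i + 1) : K⟦X⟧)
  set P := ∏ i ∈ range n, expand (i + 1) i.succ_ne_zero (oddSeries K)
  have hQ : Q * Q⁻¹ = 1 := PowerSeries.mul_inv_cancel Q (by simp [Q, map_prod])
  have hPQ : ∏ i ∈ range n, (1 + X ^ (i + 1)) = P * Q ^ 2 := by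
    rw [← prod_pow, ← prod_mul_distrib]
    exact prod_congr rfl fun i _ => by rw [mul_comm, one_sub_X_pow_sq_mul_expand_oddSeries]
  calc (∏ i ∈ range n, (1 + X ^ (i + 1))) * Q⁻¹ ^ 2 = P * (Q * Q⁻¹) ^ 2 := by rw [hPQ]; ring
    _ = P := by rw [hQ, one_pow, mul_one]

end PowerSeries

section Coefficients

variable {R : Type*} [CommRing R]

theorem dvd_of_prod_coeff_expand_ne_zero {n : ℕ} {l : ℕ →₀ ℕ} {φ : ℕ → R⟦X⟧}
    (h : ∏ i ∈ range n, coeff (l i) (expand (i + 1) i.succ_ne_zero (φ i)) ≠ 0) :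
    ∀ i < n, i + 1 ∣ l i := fun i hi => by
  by_contra hndvd
  exact h (prod_eq_zero (mem_range.2 hi) (coeff_expand_of_not_dvd _ _ _ hndvd))

theorem prod_coeff_expand_oddSeries_scaledGaps {L : List ℕ} (hL : L.Pairwise (· > ·))
    (hpos : ∀ x ∈ L, 0 < x) :
    ∏ i ∈ range L.length, coeff (scaledGaps L i) (expand (i + 1) i.succ_ne_zero (oddSeries R))
      = (wtTwo L : R) := by
  rw [wtTwo_eq_prod_gaps hL hpos, Nat.cast_prod]
  refine prod_congr rfl fun i _ => ?_
  rw [scaledGaps_apply, coeff_expand_mul, oddSeries, coeff_mk]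

theorem sum_prod_coeff_expand_oddSeries {m n : ℕ} (hT : n * (n + 1) / 2 ≤ m) :
    ∑ l ∈ finsuppAntidiag (range n) (m - n * (n + 1) / 2),
        ∏ i ∈ range n, coeff (l i) (expand (i + 1) i.succ_ne_zero (oddSeries R))
      = ∑ π : m.Partition with π.parts.Nodup ∧ π.parts.card = n,
          (wtTwo (π.parts.sort (· ≥ ·)) : R) := by
  rw [← sum_filter_of_ne fun l _ => dvd_of_prod_coeff_expand_ne_zero, ← scaledGapVectors]
  symm
  refine sum_bij' (fun π _ => scaledGaps (π.parts.sort (· ≥ ·)))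
    (fun l hl => ⟨ofScaledGaps n l, fun hx => List.pos_of_mem_ofGaps (Multiset.mem_coe.1 hx),
      by rw [Multiset.sum_coe, sum_ofScaledGaps_of_mem hT hl]⟩) ?_ ?_ ?_ ?_ ?_
  · intro π hπ
    obtain ⟨hnodup, rfl⟩ := (mem_filter.1 hπ).2
    exact scaledGaps_mem_scaledGapVectors π hnodup
  · intro l _
    simp only [mem_filter, mem_univ, true_and, Multiset.coe_nodup, Multiset.coe_card,
      length_ofScaledGaps, and_true]
    exact pairwise_ofScaledGaps.nodup
  · intro π hπ
    obtain ⟨hnodup, rfl⟩ := (mem_filter.1 hπ).2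
    ext1
    dsimp only
    rw [← Multiset.length_sort (· ≥ ·), ofScaledGaps_scaledGaps (π.pairwise_sort_parts hnodup)
      fun _ => π.pos_of_mem_sort_parts, Multiset.sort_eq]
  · intro l hl
    obtain ⟨⟨-, hsupp⟩, hdvd⟩ := mem_scaledGapVectors.1 hl
    dsimp only
    rw [Multiset.sort_coe_of_pairwise (· ≥ ·) (pairwise_ofScaledGaps.imp le_of_lt),
      scaledGaps_ofScaledGaps hsupp hdvd]
  · intro π hπ
    obtain ⟨hnodup, rfl⟩ := (mem_filter.1 hπ).2
    rw [← Multiset.length_sort (· ≥ ·)]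
    exact (prod_coeff_expand_oddSeries_scaledGaps (π.pairwise_sort_parts hnodup)
      fun _ => π.pos_of_mem_sort_parts).symm

theorem coeff_X_pow_mul_prod_expand_oddSeries (m n : ℕ) :
    coeff m (X ^ (n * (n + 1) / 2) * ∏ i ∈ range n, expand (i + 1) i.succ_ne_zero (oddSeries R))
      = ∑ π : m.Partition with π.parts.Nodup ∧ π.parts.card = n,
          (wtTwo (π.parts.sort (· ≥ ·)) : R) := by
  rw [coeff_X_pow_mul', coeff_prod]
  split_ifs with hT
  · exact sum_prod_coeff_expand_oddSeries hT
  · refine (sum_eq_zero fun π hπ => absurd ?_ hT).symm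
    obtain ⟨hnodup, rfl⟩ := (mem_filter.1 hπ).2
    have := π.eq_add_sum_scaledGaps hnodup
    omega

end Coefficients

theorem stmt_16 :
    ∀ m : ℕ,
      (∑ π ∈ Finset.univ.filter (fun π : Nat.Partition m => π.parts.Nodup),
          (wtTwo (π.parts.sort (· ≥ ·)) : ℚ))
        = PowerSeries.coeff (R := ℚ) m
            (∑ n ∈ Finset.range (m + 1),
              (PowerSeries.X : PowerSeries ℚ) ^ (n * (n + 1) / 2)
                * (∏ i ∈ Finset.range n, (1 + (PowerSeries.X : PowerSeries ℚ) ^ (i + 1)))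
                * ((∏ i ∈ Finset.range n, (1 - (PowerSeries.X : PowerSeries ℚ) ^ (i + 1)))⁻¹) ^ 2) := by
  intro m
  simp_rw [mul_assoc, prod_one_add_X_pow_mul_inv_prod_one_sub_X_pow_sq, map_sum,
    coeff_X_pow_mul_prod_expand_oddSeries, ← filter_filter]
  exact (sum_fiberwise_of_maps_to (fun π _ => mem_range.2 (Nat.lt_succ_of_le π.card_parts_le)) _).symm
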